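/- arXiv:2510.11061 — 2 statements merged into one kernel-verified Lean document; each statement's English description precedes it below -/
import Mathlib

section
/- For every nonempty roughly shift-invariant discrete set A ⊆ ℝ^d there exists a density D > 0 such that #(A ∩ B(x,T)) / m_d(B(x,T)) → D as T → ∞, uniformly with respect to x ∈ ℝ^d, where B(x,T) is the Euclidean ball of radius T centered at x and m_d is Lebesgue measure. -/
open Set MeasureTheory

noncomputable section

/-- `A ⊆ ℝ^d` (Euclidean) is discrete: finite intersection with any ball. -/
def IsDiscreteSet {d : ℕ} (A : Set (EuclideanSpace ℝ (Fin d))) : Prop :=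
  ∀ (x : EuclideanSpace ℝ (Fin d)) (r : ℝ), (A ∩ Metric.ball x r).Finite

/-- `A` is roughly shift-invariant with constant `L` (Euclidean norm). -/
def RSI {d : ℕ} (A : Set (EuclideanSpace ℝ (Fin d))) (L : ℝ) : Prop :=
  ∀ x : EuclideanSpace ℝ (Fin d), ∃ σ : A ≃ A,
    ∀ a : A, ‖(a : EuclideanSpace ℝ (Fin d)) + x - (σ a : EuclideanSpace ℝ (Fin d))‖ < L

/-!
Write `N(x, T) = #(A ∩ B(x, T))`. Rough shift-invariance gives `N(x, T) ≤ N(y, T + L)` for all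
centres `x, y`, so up to an error `L` in the radius all balls of the same radius contain the same
number of points and it suffices to study `φ T = N(0, T)`. Integrating `x ↦ N(x, T)` over
`B(0, R)`, where each point `a` contributes the volume of `B(a, T) ∩ B(0, R)`, gives
`φ (R - T) T^d ≤ R^d φ (T + L)` and `R^d φ (T - L) ≤ φ (R + T) T^d`. Letting `R → ∞` shows
`φ (T - L) / T^d ≤ φ (T' + L) / T'^d` for all `T, T' > 0`; the infimum of the right-hand sides is
then the common limit of both quotients, and it is positive because every ball of radius `L`
meets `A`. The density is this limit divided by the volume of the unit ball.
-/
open Metric Filter Topology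
open scoped ENNReal

section DoubleCounting

variable {E : Type*} [NormedAddCommGroup E] {A : Set E} {R T : ℝ}

lemma ncard_inter_ball_eq_sum_indicator (hA : (A ∩ ball 0 (R + T)).Finite) {x : E}
    (hx : x ∈ ball 0 R) :
    ((A ∩ ball x T).ncard : ℝ≥0∞) = ∑ a ∈ hA.toFinset, (ball a T).indicator 1 x := by
  classical
  have hset : A ∩ ball x T = ↑(hA.toFinset.filter (x ∈ ball · T)) := by
    ext a
    simp only [Finset.coe_filter, Finite.mem_toFinset, mem_inter_iff, mem_ofPred_eq, mem_ball,
      dist_comm x a]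
    refine ⟨fun ⟨haA, hax⟩ => ⟨⟨haA, ?_⟩, hax⟩, fun ⟨⟨haA, _⟩, hax⟩ => ⟨haA, hax⟩⟩
    calc dist a 0 ≤ dist a x + dist x 0 := dist_triangle _ _ _
      _ < R + T := by rw [mem_ball] at hx; linarith
  rw [hset, ncard_coe_finset, Finset.card_filter, Nat.cast_sum]
  simp [indicator_apply]

variable [MeasurableSpace E] [OpensMeasurableSpace E] (μ : Measure E)

lemma lintegral_ncard_inter_ball (hA : (A ∩ ball 0 (R + T)).Finite) :
    ∫⁻ x in ball 0 R, ((A ∩ ball x T).ncard : ℝ≥0∞) ∂μ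
      = ∑ a ∈ hA.toFinset, μ (ball a T ∩ ball 0 R) := by
  rw [setLIntegral_congr_fun measurableSet_ball fun x hx =>
      ncard_inter_ball_eq_sum_indicator hA hx,
    lintegral_finsetSum _ fun a _ => measurable_one.indicator measurableSet_ball]
  refine Finset.sum_congr rfl fun a _ => ?_
  rw [lintegral_indicator measurableSet_ball, Pi.one_def, setLIntegral_const, one_mul,
    Measure.restrict_apply measurableSet_ball]

variable [BorelSpace E] [μ.IsAddHaarMeasure]

lemma ncard_mul_measure_ball_le (hA : (A ∩ ball 0 (R + T)).Finite) (hT : 0 ≤ T) {M : ℕ}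
    (hM : ∀ x ∈ ball (0 : E) R, (A ∩ ball x T).ncard ≤ M) :
    (A ∩ ball 0 (R - T)).ncard * μ (ball 0 T) ≤ μ (ball 0 R) * M := by
  classical
  have hcard :
      (A ∩ ball 0 (R - T)).ncard = (hA.toFinset.filter (· ∈ ball (0 : E) (R - T))).card := by
    rw [← ncard_coe_finset]
    congr 1
    ext a
    simp only [Finset.coe_filter, Finite.mem_toFinset, mem_inter_iff, mem_ofPred_eq]
    exact ⟨fun ⟨haA, ha⟩ => ⟨⟨haA, ball_subset_ball (by linarith) ha⟩, ha⟩,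
      fun ⟨⟨haA, _⟩, ha⟩ => ⟨haA, ha⟩⟩
  calc ((A ∩ ball 0 (R - T)).ncard : ℝ≥0∞) * μ (ball 0 T)
      = ∑ a ∈ hA.toFinset.filter (· ∈ ball (0 : E) (R - T)), μ (ball a T ∩ ball 0 R) := by
        rw [hcard, ← nsmul_eq_mul, ← Finset.sum_const]
        refine Finset.sum_congr rfl fun a ha => ?_
        have ha' := (Finset.mem_filter.1 ha).2
        rw [mem_ball] at ha'
        rw [inter_eq_left.2 (ball_subset_ball' (by linarith)), Measure.addHaar_ball_center μ a]
    _ ≤ ∑ a ∈ hA.toFinset, μ (ball a T ∩ ball 0 R) :=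
        Finset.sum_le_sum_of_subset (Finset.filter_subset _ _)
    _ = ∫⁻ x in ball 0 R, ((A ∩ ball x T).ncard : ℝ≥0∞) ∂μ :=
        (lintegral_ncard_inter_ball μ hA).symm
    _ ≤ ∫⁻ _ in ball 0 R, (M : ℝ≥0∞) ∂μ :=
        setLIntegral_mono' measurableSet_ball fun x hx => by exact_mod_cast hM x hx
    _ = μ (ball 0 R) * M := by rw [setLIntegral_const, mul_comm]

lemma measure_ball_mul_le_ncard_mul (hA : (A ∩ ball 0 (R + T)).Finite) {m : ℕ}
    (hm : ∀ x ∈ ball (0 : E) R, m ≤ (A ∩ ball x T).ncard) :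
    μ (ball 0 R) * m ≤ (A ∩ ball 0 (R + T)).ncard * μ (ball 0 T) := by
  calc μ (ball 0 R) * m = ∫⁻ _ in ball 0 R, (m : ℝ≥0∞) ∂μ := by rw [setLIntegral_const, mul_comm]
    _ ≤ ∫⁻ x in ball 0 R, ((A ∩ ball x T).ncard : ℝ≥0∞) ∂μ :=
        setLIntegral_mono' measurableSet_ball fun x hx => by exact_mod_cast hm x hx
    _ = ∑ a ∈ hA.toFinset, μ (ball a T ∩ ball 0 R) := lintegral_ncard_inter_ball μ hA
    _ ≤ ∑ _a ∈ hA.toFinset, μ (ball 0 T) := Finset.sum_le_sum fun a _ => by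
        rw [← Measure.addHaar_ball_center μ a]; exact measure_mono inter_subset_left
    _ = (A ∩ ball 0 (R + T)).ncard * μ (ball 0 T) := by
        rw [Finset.sum_const, nsmul_eq_mul, ncard_eq_toFinset_card _ hA]

end DoubleCounting

section RoughlyShiftInvariant

variable {d : ℕ} {A : Set (EuclideanSpace ℝ (Fin d))} {L : ℝ}

lemma RSI.ncard_inter_ball_le_ncard_inter_ball_add (hA : RSI A L) (hdisc : IsDiscreteSet A)
    (x y : EuclideanSpace ℝ (Fin d)) (T : ℝ) :
    (A ∩ ball x T).ncard ≤ (A ∩ ball y (T + L)).ncard := by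
  classical
  obtain ⟨σ, hσ⟩ := hA (y - x)
  refine ncard_le_ncard_of_injOn (fun a => if h : a ∈ A then (σ ⟨a, h⟩ : _) else a)
    (fun a ⟨haA, hax⟩ => ?_) (fun a ha b hb hab => ?_) (hdisc y (T + L))
  · simp only [dif_pos haA]
    refine ⟨(σ ⟨a, haA⟩).2, ?_⟩
    calc dist (σ ⟨a, haA⟩ : EuclideanSpace ℝ (Fin d)) y
        ≤ dist (σ ⟨a, haA⟩ : EuclideanSpace ℝ (Fin d)) (a + (y - x)) + dist (a + (y - x)) y :=
          dist_triangle _ _ _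
      _ < L + T := by
        rw [dist_comm, dist_eq_norm, dist_eq_norm, show a + (y - x) - y = a - x by abel,
          ← dist_eq_norm]
        exact add_lt_add (hσ ⟨a, haA⟩) hax
      _ = T + L := add_comm L T
  · simp only [dif_pos ha.1, dif_pos hb.1] at hab
    exact congrArg Subtype.val (σ.injective (Subtype.ext hab))

lemma RSI.ncard_inter_ball_sub_le_ncard_inter_ball (hA : RSI A L) (hdisc : IsDiscreteSet A)
    (x y : EuclideanSpace ℝ (Fin d)) (T : ℝ) :
    (A ∩ ball x (T - L)).ncard ≤ (A ∩ ball y T).ncard := by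
  simpa using hA.ncard_inter_ball_le_ncard_inter_ball_add hdisc x y (T - L)

lemma RSI.inter_ball_nonempty (hA : RSI A L) (hne : A.Nonempty) (x : EuclideanSpace ℝ (Fin d)) :
    (A ∩ ball x L).Nonempty := by
  obtain ⟨a, ha⟩ := hne
  obtain ⟨σ, hσ⟩ := hA (x - a)
  refine ⟨σ ⟨a, ha⟩, (σ ⟨a, ha⟩).2, ?_⟩
  simpa [mem_ball, dist_eq_norm, norm_sub_rev] using hσ ⟨a, ha⟩

lemma RSI.pos_of_nonempty (hA : RSI A L) (hne : A.Nonempty) : 0 < L :=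
  dist_nonneg.trans_lt (hA.inter_ball_nonempty hne 0).some_mem.2

lemma toReal_volume_ball (x : EuclideanSpace ℝ (Fin d)) {r : ℝ} (hr : 0 < r) :
    (volume (ball x r)).toReal =
      (volume (ball (0 : EuclideanSpace ℝ (Fin d)) 1)).toReal * r ^ d := by
  rw [Measure.addHaar_ball_of_pos volume x hr, ENNReal.toReal_mul,
    ENNReal.toReal_ofReal (by positivity), finrank_euclideanSpace_fin, mul_comm]

lemma toReal_volume_ball_one_pos :
    0 < (volume (ball (0 : EuclideanSpace ℝ (Fin d)) 1)).toReal :=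
  ENNReal.toReal_pos (measure_ball_pos volume 0 one_pos).ne' measure_ball_lt_top.ne

lemma RSI.ncard_inter_ball_sub_mul_pow_le (hA : RSI A L) (hdisc : IsDiscreteSet A) {T R : ℝ}
    (hT : 0 < T) (hR : 0 < R) :
    ((A ∩ ball 0 (R - T)).ncard : ℝ) * T ^ d ≤ R ^ d * (A ∩ ball 0 (T + L)).ncard := by
  have h := ncard_mul_measure_ball_le volume (hdisc 0 (R + T)) hT.le
    fun x _ => hA.ncard_inter_ball_le_ncard_inter_ball_add hdisc x 0 T
  have h := ENNReal.toReal_mono (by finiteness) h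
  simp only [ENNReal.toReal_mul, ENNReal.toReal_natCast, toReal_volume_ball _ hT,
    toReal_volume_ball _ hR] at h
  exact le_of_mul_le_mul_left (by linarith) toReal_volume_ball_one_pos

lemma RSI.pow_mul_ncard_inter_ball_sub_le (hA : RSI A L) (hdisc : IsDiscreteSet A) {T R : ℝ}
    (hT : 0 < T) (hR : 0 < R) :
    R ^ d * (A ∩ ball 0 (T - L)).ncard ≤ ((A ∩ ball 0 (R + T)).ncard : ℝ) * T ^ d := by
  have h := measure_ball_mul_le_ncard_mul volume (hdisc 0 (R + T))
    fun x _ => hA.ncard_inter_ball_sub_le_ncard_inter_ball hdisc 0 x T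
  have h := ENNReal.toReal_mono (by finiteness) h
  simp only [ENNReal.toReal_mul, ENNReal.toReal_natCast, toReal_volume_ball _ hT,
    toReal_volume_ball _ hR] at h
  exact le_of_mul_le_mul_left (by linarith) toReal_volume_ball_one_pos

end RoughlyShiftInvariant

section Density

variable {φ : ℝ → ℝ} {d : ℕ} {L : ℝ}

lemma tendsto_add_pow_div_add_pow (d : ℕ) (a b : ℝ) :
    Tendsto (fun S : ℝ => (S + a) ^ d / (S + b) ^ d) atTop (𝓝 1) := by
  have h : Tendsto (fun S : ℝ => (1 + (a - b) / (S + b)) ^ d) atTop (𝓝 1) := by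
    have hinv := (tendsto_const_nhds (x := a - b)).div_atTop
      (tendsto_atTop_add_const_right atTop b tendsto_id)
    simpa using ((tendsto_const_nhds (x := (1 : ℝ))).add hinv).pow d
  refine h.congr' ?_
  filter_upwards [eventually_gt_atTop (-b)] with S hS
  have hS : S + b ≠ 0 := by linarith
  rw [← div_pow]
  congr 1
  field_simp
  ring

lemma sub_div_pow_le_add_div_pow
    (hup : ∀ T R, 0 < T → 0 < R → φ (R - T) * T ^ d ≤ R ^ d * φ (T + L))
    (hlow : ∀ T R, 0 < T → 0 < R → R ^ d * φ (T - L) ≤ φ (R + T) * T ^ d)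
    {T T' : ℝ} (hT : 0 < T) (hT' : 0 < T') :
    φ (T - L) / T ^ d ≤ φ (T' + L) / T' ^ d := by
  have hlim : Tendsto (fun S => φ (T' + L) / T' ^ d * ((S + T') ^ d / (S + -T) ^ d)) atTop
      (𝓝 (φ (T' + L) / T' ^ d)) := by
    simpa using tendsto_const_nhds.mul (tendsto_add_pow_div_add_pow d T' (-T))
  refine ge_of_tendsto hlim ?_
  filter_upwards [eventually_gt_atTop T] with S hS
  have hST : 0 < S - T := by linarith
  have h₁ : (S - T) ^ d * φ (T - L) ≤ φ S * T ^ d := by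
    simpa using hlow T (S - T) hT hST
  have h₂ : φ S * T' ^ d ≤ (S + T') ^ d * φ (T' + L) := by
    simpa using hup T' (S + T') hT' (by linarith)
  calc φ (T - L) / T ^ d ≤ φ S / (S - T) ^ d := by
        rw [div_le_div_iff₀ (by positivity) (by positivity)]; linarith
    _ ≤ (S + T') ^ d * (φ (T' + L) / T' ^ d) / (S - T) ^ d := by
        gcongr
        rw [mul_div_assoc', le_div_iff₀ (by positivity)]
        exact h₂
    _ = φ (T' + L) / T' ^ d * ((S + T') ^ d / (S + -T) ^ d) := by ring

lemma tendsto_add_div_pow_of_isGLB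
    (hup : ∀ T R, 0 < T → 0 < R → φ (R - T) * T ^ d ≤ R ^ d * φ (T + L)) {D : ℝ}
    (hD : IsGLB ((fun T => φ (T + L) / T ^ d) '' Ioi 0) D) :
    Tendsto (fun T => φ (T + L) / T ^ d) atTop (𝓝 D) := by
  refine tendsto_order.2 ⟨fun a ha => ?_, fun b hb => ?_⟩
  · filter_upwards [eventually_gt_atTop 0] with T hT
    exact ha.trans_le (hD.1 ⟨T, hT, rfl⟩)
  obtain ⟨_, ⟨T', hT' : 0 < T', rfl⟩, -, hT'b⟩ := hD.exists_between hb
  have hlim : Tendsto (fun T => φ (T' + L) / T' ^ d * ((T + (L + T')) ^ d / (T + 0) ^ d)) atTop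
      (𝓝 (φ (T' + L) / T' ^ d)) := by
    simpa using tendsto_const_nhds.mul (tendsto_add_pow_div_add_pow d (L + T') 0)
  filter_upwards [hlim.eventually_lt_const hT'b, eventually_gt_atTop 0,
    eventually_gt_atTop (-L)] with T hTb hT hTL
  refine lt_of_le_of_lt ?_ hTb
  have h := hup T' (T + L + T') hT' (by linarith)
  rw [add_sub_cancel_right, add_assoc T L T'] at h
  rw [add_zero, mul_div_assoc', div_le_div_iff_of_pos_right (by positivity),
    div_mul_eq_mul_div, le_div_iff₀ (by positivity)]
  linarith

lemma tendsto_sub_div_pow_of_isGLB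
    (hup : ∀ T R, 0 < T → 0 < R → φ (R - T) * T ^ d ≤ R ^ d * φ (T + L))
    (hlow : ∀ T R, 0 < T → 0 < R → R ^ d * φ (T - L) ≤ φ (R + T) * T ^ d) {D : ℝ}
    (hD : IsGLB ((fun T => φ (T + L) / T ^ d) '' Ioi 0) D) :
    Tendsto (fun T => φ (T - L) / T ^ d) atTop (𝓝 D) := by
  refine tendsto_order.2 ⟨fun a ha => ?_, fun b hb => ?_⟩
  · have hlim : Tendsto (fun T => D * ((T + -(2 * L)) ^ d / (T + 0) ^ d)) atTop (𝓝 D) := by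
      simpa using tendsto_const_nhds.mul (tendsto_add_pow_div_add_pow d (-(2 * L)) 0)
    filter_upwards [hlim.eventually_const_lt ha, eventually_gt_atTop (2 * L),
      eventually_gt_atTop 0] with T haT hT hT₀
    refine haT.trans_le ?_
    have h : D ≤ φ (T - L) / (T - 2 * L) ^ d := by
      simpa [show T - 2 * L + L = T - L by ring] using hD.1 ⟨T - 2 * L, sub_pos.2 hT, rfl⟩
    rw [le_div_iff₀ (pow_pos (sub_pos.2 hT) d)] at h
    rw [add_zero, ← sub_eq_add_neg, mul_div_assoc', div_le_div_iff_of_pos_right (by positivity)]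
    exact h
  · filter_upwards [eventually_gt_atTop 0] with T hT
    refine lt_of_le_of_lt (hD.2 ?_) hb
    rintro _ ⟨T', hT' : 0 < T', rfl⟩
    exact sub_div_pow_le_add_div_pow hup hlow hT hT'

lemma exists_pos_tendsto_div_pow (hL : 0 < L) (hφL : 0 < φ L)
    (hup : ∀ T R, 0 < T → 0 < R → φ (R - T) * T ^ d ≤ R ^ d * φ (T + L))
    (hlow : ∀ T R, 0 < T → 0 < R → R ^ d * φ (T - L) ≤ φ (R + T) * T ^ d) :
    ∃ D > 0, Tendsto (fun T => φ (T - L) / T ^ d) atTop (𝓝 D) ∧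
      Tendsto (fun T => φ (T + L) / T ^ d) atTop (𝓝 D) := by
  set U := (fun T => φ (T + L) / T ^ d) '' Ioi 0
  have hbdd : ∀ T > 0, φ (T - L) / T ^ d ∈ lowerBounds U := by
    rintro T hT _ ⟨T', hT' : 0 < T', rfl⟩
    exact sub_div_pow_le_add_div_pow hup hlow hT hT'
  have hD : IsGLB U (sInf U) :=
    isGLB_csInf (nonempty_Ioi.image _) ⟨_, hbdd 1 one_pos⟩
  refine ⟨sInf U, ?_, tendsto_sub_div_pow_of_isGLB hup hlow hD,
    tendsto_add_div_pow_of_isGLB hup hD⟩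
  calc 0 < φ (2 * L - L) / (2 * L) ^ d := by rw [show 2 * L - L = L by ring]; positivity
    _ ≤ sInf U := hD.2 (hbdd (2 * L) (by positivity))

end Density

theorem stmt6 {d : ℕ} (A : Set (EuclideanSpace ℝ (Fin d))) (L : ℝ)
    (hdisc : IsDiscreteSet A) (hA : RSI A L) (hne : A.Nonempty) :
    ∃ D : ℝ, 0 < D ∧
      ∀ ε > (0 : ℝ), ∃ T₀ : ℝ, ∀ T : ℝ, T₀ ≤ T → ∀ x : EuclideanSpace ℝ (Fin d),
        |((A ∩ Metric.ball x T).ncard : ℝ) / (volume (Metric.ball x T)).toReal - D| < ε := by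
  set c := (volume (ball (0 : EuclideanSpace ℝ (Fin d)) 1)).toReal
  have hc : 0 < c := toReal_volume_ball_one_pos
  obtain ⟨D, hD, hlow, hup⟩ := exists_pos_tendsto_div_pow (φ := fun T => (A ∩ ball 0 T).ncard)
    (hA.pos_of_nonempty hne) (mod_cast (hA.inter_ball_nonempty hne 0).ncard_pos (hdisc 0 L))
    (fun _ _ hT hR => hA.ncard_inter_ball_sub_mul_pow_le hdisc hT hR)
    (fun _ _ hT hR => hA.pow_mul_ncard_inter_ball_sub_le hdisc hT hR)
  refine ⟨D / c, div_pos hD hc, fun ε hε => ?_⟩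
  obtain ⟨T₀, hT₀⟩ := eventually_atTop.1 <|
    ((hlow.div_const c).eventually_const_lt (sub_lt_self (D / c) hε)).and <|
    ((hup.div_const c).eventually_lt_const (lt_add_of_pos_right (D / c) hε)).and <|
    eventually_gt_atTop 0
  refine ⟨T₀, fun T hT x => ?_⟩
  obtain ⟨hlowT, hupT, hT⟩ := hT₀ T hT
  have hle : ((A ∩ ball x T).ncard : ℝ) / T ^ d / c ≤ (A ∩ ball 0 (T + L)).ncard / T ^ d / c := by
    gcongr ?_ / _ / _; exact_mod_cast hA.ncard_inter_ball_le_ncard_inter_ball_add hdisc x 0 T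
  have hge : ((A ∩ ball 0 (T - L)).ncard : ℝ) / T ^ d / c ≤ (A ∩ ball x T).ncard / T ^ d / c := by
    gcongr ?_ / _ / _; exact_mod_cast hA.ncard_inter_ball_sub_le_ncard_inter_ball hdisc 0 x T
  rw [toReal_volume_ball x hT, mul_comm, ← div_div, abs_sub_lt_iff]
  constructor <;> linarith
end
end

section
/- Every roughly shift-invariant discrete set A ⊆ ℝ^d with density D is uniformly spread: there exist a constant C < ∞ and a bijection Θ : A → D^{−1/d}·ℤ^d such that sup_{a∈A} |a − Θ(a)| < C. -/
/-
Hall's marriage theorem, applied in both directions to the relation "at distance `< R`" between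
`A` and the lattice `Λ`, gives injections `A → Λ` and `Λ → A` moving points by less than `R`, and
the Schröder–Bernstein construction merges them into a bijection with the same property.

Hall's condition `#F ≤ #(Y ∩ N_R(F))` for finite `F ⊆ X`, with `{X, Y} = {A, Λ}`, comes from
double counting the pairs `(v, x) ∈ (Y ∩ B_T) × (X ∩ B_{T+c})` with `x + v` close to `F`: the
near-translation of `X` by `-v` gives every `v` at least `#F` partners, and the near-translation of
`Y` by `x` embeds the partners of `x` into `Y ∩ N_R(F)`. As `X` and `Y` have the same density,
`#(X ∩ B_{T+c}) / #(Y ∩ B_T) → 1`, hence the inequality (`B_T` is the ball of radius `T` about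
`0`, `N_R(F)` the `R`-neighbourhood of `F`). The lattice qualifies for `X` or `Y`: it
is a group whose points are within `√d · D^{-1/d}` of every point of space, and its half-open
cells, of volume `1/D`, tile space.
-/

open Set MeasureTheory

noncomputable section

/-- The scaled lattice `D^{-1/d}·ℤ^d` in Euclidean `ℝ^d`. -/
def lattice {d : ℕ} (D : ℝ) : Set (EuclideanSpace ℝ (Fin d)) :=
  {y | ∀ j, ∃ m : ℤ, y j = D ^ (-(1 : ℝ) / d) * m}

open Filter Topology Metric Function

local notation "ℝ^" d:max => EuclideanSpace ℝ (Fin d)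

theorem exists_bijective_of_forall_card_le_card_biUnion {α β : Type*} [DecidableEq α]
    [DecidableEq β] {r : α → β → Prop} (t : α → Finset β) (t' : β → Finset α)
    (ht : ∀ a, ∀ b ∈ t a, r a b) (ht' : ∀ b, ∀ a ∈ t' b, r a b)
    (hall : ∀ s : Finset α, s.card ≤ (s.biUnion t).card)
    (hall' : ∀ s : Finset β, s.card ≤ (s.biUnion t').card) :
    ∃ h : α → β, Bijective h ∧ ∀ a, r a (h a) := by
  obtain ⟨f, hf, hft⟩ := (Finset.all_card_le_biUnion_card_iff_exists_injective t).1 hall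
  obtain ⟨g, hg, hgt⟩ := (Finset.all_card_le_biUnion_card_iff_exists_injective t').1 hall'
  exact Embedding.schroeder_bernstein_of_rel hf hg r (fun a ↦ ht a _ (hft a))
    (fun b ↦ ht' b _ (hgt b))

theorem le_of_eventually_mul_le_of_tendsto_div {ι : Type*} {l : Filter ι} [l.NeBot]
    {m n : ℕ} {x y : ι → ℕ} (hle : ∀ᶠ i in l, y i * m ≤ x i * n)
    (hxy : Tendsto (fun i ↦ (x i : ℝ) / y i) l (𝓝 1)) : m ≤ n := by
  have hpos : ∀ᶠ i in l, (0 : ℝ) < x i / y i := hxy.eventually (lt_mem_nhds one_pos)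
  have hm : ∀ᶠ i in l, (m : ℝ) ≤ n * (x i / y i) := by
    filter_upwards [hle, hpos] with i hi hp
    -- `x / 0 = 0`, so a positive ratio forces `y i ≠ 0`.
    have hy : (0 : ℝ) < y i := Nat.cast_pos.2 (Nat.pos_of_ne_zero fun h ↦ by simp [h] at hp)
    rw [mul_div_assoc', le_div_iff₀ hy]
    exact_mod_cast (mul_comm _ _).trans_le (hi.trans_eq (mul_comm _ _))
  have hlim : Tendsto (fun i ↦ (n : ℝ) * (x i / y i)) l (𝓝 n) := by
    simpa using hxy.const_mul (n : ℝ)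
  exact_mod_cast ge_of_tendsto hlim hm

section Density

variable {E : Type*} [NormedAddCommGroup E] [MeasurableSpace E]

def HasDensity (μ : Measure E) (X : Set E) (D : ℝ) : Prop :=
  Tendsto (fun T ↦ ((X ∩ ball 0 T).ncard : ℝ) / μ.real (ball 0 T)) atTop (𝓝 D)

theorem HasDensity.nonempty {μ : Measure E} {X : Set E} {D : ℝ} (h : HasDensity μ X D)
    (hD : D ≠ 0) : X.Nonempty := by
  rw [nonempty_iff_ne_empty]
  rintro rfl
  exact hD (tendsto_nhds_unique h (by simp))

theorem measureReal_ball_pos [ProperSpace E] (μ : Measure E) [μ.IsOpenPosMeasure]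
    [IsFiniteMeasureOnCompacts μ] (x : E) {r : ℝ} (hr : 0 < r) : 0 < μ.real (ball x r) :=
  ENNReal.toReal_pos (measure_ball_pos μ x hr).ne' measure_ball_lt_top.ne

variable [NormedSpace ℝ E] [BorelSpace E] [FiniteDimensional ℝ E] (μ : Measure E)
  [μ.IsAddHaarMeasure]

theorem tendsto_measureReal_ball_add_div (x : E) (c : ℝ) :
    Tendsto (fun T ↦ μ.real (ball x (T + c)) / μ.real (ball x T)) atTop (𝓝 1) := by
  have hlim : Tendsto (fun T : ℝ ↦ (1 + c * T⁻¹) ^ Module.finrank ℝ E) atTop (𝓝 1) := by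
    simpa using ((tendsto_inv_atTop_zero.const_mul c).const_add 1).pow (Module.finrank ℝ E)
  refine hlim.congr' ?_
  filter_upwards [eventually_gt_atTop 0, eventually_gt_atTop (-c)] with T hT hTc
  have hTc' : 0 < T + c := neg_lt_iff_pos_add.1 hTc
  have h1 := measureReal_ball_pos μ (0 : E) one_pos
  rw [measureReal_def] at h1
  simp only [measureReal_def, Measure.addHaar_ball_of_pos μ x hT,
    Measure.addHaar_ball_of_pos μ x hTc', ENNReal.toReal_mul,
    ENNReal.toReal_ofReal (pow_nonneg hT.le _), ENNReal.toReal_ofReal (pow_nonneg hTc'.le _)]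
  rw [mul_div_mul_right _ _ h1.ne', ← div_pow, add_div, div_self hT.ne', div_eq_mul_inv]

theorem HasDensity.tendsto_ncard_div_ncard {X Y : Set E} {D : ℝ} (hX : HasDensity μ X D)
    (hY : HasDensity μ Y D) (hD : D ≠ 0) (c : ℝ) :
    Tendsto (fun T ↦ ((X ∩ ball 0 (T + c)).ncard : ℝ) / (Y ∩ ball 0 T).ncard) atTop (𝓝 1) := by
  have hXc := hX.comp (tendsto_atTop_add_const_right _ c tendsto_id)
  have hlim := (hXc.mul (tendsto_measureReal_ball_add_div μ 0 c)).div hY hD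
  rw [mul_one, div_self hD] at hlim
  refine hlim.congr' ?_
  filter_upwards [eventually_gt_atTop 0, eventually_gt_atTop (-c)] with T hT hTc
  have h1 := measureReal_ball_pos μ (0 : E) hT
  have h2 := measureReal_ball_pos μ (0 : E) (neg_lt_iff_pos_add.1 hTc)
  simp only [comp_apply, id, Pi.div_apply]
  field_simp

end Density

section Euclidean

variable {d : ℕ}

def IsDiscreteSet.ballFinset {X : Set (ℝ^d)} (hX : IsDiscreteSet X) (x : ℝ^d) (r : ℝ) :
    Finset X :=
  ((hX x r).preimage Subtype.val_injective.injOn).toFinset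

theorem IsDiscreteSet.mem_ballFinset {X : Set (ℝ^d)} (hX : IsDiscreteSet X) {x : ℝ^d} {r : ℝ}
    {a : X} : a ∈ hX.ballFinset x r ↔ dist (a : ℝ^d) x < r := by
  simp [ballFinset]

theorem IsDiscreteSet.card_ballFinset {X : Set (ℝ^d)} (hX : IsDiscreteSet X) (x : ℝ^d) (r : ℝ) :
    (hX.ballFinset x r).card = (X ∩ ball x r).ncard := by
  rw [ballFinset, ← Set.ncard_eq_toFinset_card _ ((hX x r).preimage Subtype.val_injective.injOn),
    Set.ncard_preimage_of_injective_subset_range Subtype.val_injective (by simp)]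

theorem rsi_of_forall_exists_norm_sub_lt {H : AddSubgroup (ℝ^d)} {L : ℝ}
    (h : ∀ x, ∃ y ∈ H, ‖x - y‖ < L) : RSI (H : Set (ℝ^d)) L := by
  intro x
  obtain ⟨y, hyH, hy⟩ := h x
  exact ⟨Equiv.addRight ⟨y, hyH⟩, fun a ↦ by simpa [add_sub_add_left_eq_sub] using hy⟩

theorem RSI.exists_dist_lt {X : Set (ℝ^d)} {L : ℝ} (hX : RSI X L) :
    ∃ σ : ℝ^d → X ≃ X, ∀ v a, dist (σ v a : ℝ^d) (a + v) < L := by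
  choose σ hσ using hX
  exact ⟨σ, fun v a ↦ by rw [dist_comm, dist_eq_norm]; exact hσ v a⟩

theorem card_le_card_biUnion_ballFinset {μ : Measure (ℝ^d)} [μ.IsAddHaarMeasure]
    {X Y : Set (ℝ^d)} {D LX LY R : ℝ} (hD : D ≠ 0) (hXD : HasDensity μ X D)
    (hYD : HasDensity μ Y D) (hX : RSI X LX) (hY : RSI Y LY) (hXd : IsDiscreteSet X)
    (hYd : IsDiscreteSet Y) (hR : LX + LY ≤ R) (F : Finset X) :
    F.card ≤ (F.biUnion fun x ↦ hYd.ballFinset x R).card := by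
  classical
  obtain ⟨σX, hσX⟩ := hX.exists_dist_lt
  obtain ⟨σY, hσY⟩ := hY.exists_dist_lt
  obtain ⟨M, hM⟩ : ∃ M, ∀ f ∈ F, ‖(f : ℝ^d)‖ ≤ M :=
    ⟨∑ f ∈ F, ‖(f : ℝ^d)‖, fun f hf ↦ Finset.single_le_sum (fun _ _ ↦ norm_nonneg _) hf⟩
  let r : Y → X → Prop := fun v x ↦ ∃ f ∈ F, dist ((x : ℝ^d) + v) f < LX
  refine le_of_eventually_mul_le_of_tendsto_div (l := atTop)
    (x := fun T ↦ (hXd.ballFinset 0 (T + (M + LX))).card) (y := fun T ↦ (hYd.ballFinset 0 T).card)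
    (Eventually.of_forall fun T ↦ Finset.card_mul_le_card_mul r (fun v hv ↦ ?_) (fun x _ ↦ ?_))
    ?_
  · refine Finset.card_le_card_of_injOn (σX (-v)) (fun f hf ↦ ?_) (σX (-v)).injective.injOn
    have hσf := hσX (-v) f
    rw [hYd.mem_ballFinset, dist_zero_right] at hv
    refine (Finset.mem_bipartiteAbove r).2 ⟨hXd.mem_ballFinset.2 ?_, f, hf, ?_⟩
    · calc dist (σX (-v) f : ℝ^d) 0
          ≤ dist (σX (-v) f : ℝ^d) (f + -v) + ‖(f : ℝ^d) + -v‖ := by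
            rw [← dist_zero_right]; exact dist_triangle _ _ _
        _ < LX + (M + T) := by
            gcongr
            exact (norm_add_le _ _).trans_lt (by rw [norm_neg]; linarith [hM f hf])
        _ = T + (M + LX) := by ring
    · rwa [← dist_add_right _ _ (v : ℝ^d), neg_add_cancel_right] at hσf
  · refine Finset.card_le_card_of_injOn (σY x) (fun v hv ↦ ?_) (σY x).injective.injOn
    obtain ⟨-, f, hf, hvf⟩ := (Finset.mem_bipartiteBelow r).1 hv
    refine Finset.mem_biUnion.2 ⟨f, hf, hYd.mem_ballFinset.2 ?_⟩
    calc dist (σY x v : ℝ^d) f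
        ≤ dist (σY x v : ℝ^d) (v + x) + dist ((x : ℝ^d) + v) f := by
          rw [add_comm (x : ℝ^d)]; exact dist_triangle _ _ _
      _ < LY + LX := add_lt_add (hσY x v) hvf
      _ ≤ R := by linarith
  · simpa only [IsDiscreteSet.card_ballFinset] using
      hXD.tendsto_ncard_div_ncard μ hYD hD (M + LX)

end Euclidean

theorem EuclideanSpace.norm_le_sqrt_card_mul {ι : Type*} [Fintype ι] {x : EuclideanSpace ℝ ι}
    {c : ℝ} (hc : 0 ≤ c) (h : ∀ i, |x i| ≤ c) : ‖x‖ ≤ √(Fintype.card ι) * c := by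
  rw [EuclideanSpace.norm_eq, ← Real.sqrt_sq hc, ← Real.sqrt_mul (Nat.cast_nonneg _)]
  gcongr
  calc ∑ i, ‖x i‖ ^ 2 ≤ ∑ _i : ι, c ^ 2 :=
        Finset.sum_le_sum fun i _ ↦ pow_le_pow_left₀ (norm_nonneg _) (h i) 2
    _ = Fintype.card ι * c ^ 2 := by simp

section Lattice

variable {d : ℕ} {D : ℝ}

def latticeSpacing (D : ℝ) (d : ℕ) : ℝ := D ^ (-(1 : ℝ) / d)

theorem latticeSpacing_pos (hD : 0 < D) : 0 < latticeSpacing D d := Real.rpow_pos_of_pos hD _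

theorem latticeSpacing_pow (hD : 0 < D) (hd : d ≠ 0) : latticeSpacing D d ^ d = D⁻¹ := by
  rw [latticeSpacing, ← Real.rpow_natCast, ← Real.rpow_mul hD.le,
    div_mul_cancel₀ _ (Nat.cast_ne_zero.2 hd), Real.rpow_neg_one]

def latticeAddSubgroup (D : ℝ) (d : ℕ) : AddSubgroup (ℝ^d) where
  carrier := lattice D
  zero_mem' _ := ⟨0, by simp⟩
  add_mem' {x y} hx hy j := by
    obtain ⟨m, hm⟩ := hx j
    obtain ⟨n, hn⟩ := hy j
    exact ⟨m + n, by simp [hm, hn, mul_add]⟩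
  neg_mem' {x} hx j := by
    obtain ⟨m, hm⟩ := hx j
    exact ⟨-m, by simp [hm]⟩

def latticeFloor (D : ℝ) (x : ℝ^d) : ℝ^d :=
  WithLp.toLp 2 fun j ↦ latticeSpacing D d * ⌊x j / latticeSpacing D d⌋

theorem latticeFloor_mem (x : ℝ^d) : latticeFloor D x ∈ lattice D :=
  fun _ ↦ ⟨_, rfl⟩

def latticeCell (D : ℝ) (y : ℝ^d) : Set (ℝ^d) :=
  {w | ∀ j, w j ∈ Ico (y j) (y j + latticeSpacing D d)}

theorem self_mem_latticeCell (hD : 0 < D) (y : ℝ^d) : y ∈ latticeCell D y :=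
  fun _ ↦ ⟨le_rfl, lt_add_of_pos_right _ (latticeSpacing_pos hD)⟩

theorem mem_latticeCell_latticeFloor (hD : 0 < D) (x : ℝ^d) :
    x ∈ latticeCell D (latticeFloor D x) := by
  intro j
  have hs := latticeSpacing_pos (d := d) hD
  have h1 := Int.floor_le (x j / latticeSpacing D d)
  have h2 := Int.lt_floor_add_one (x j / latticeSpacing D d)
  rw [le_div_iff₀ hs] at h1
  rw [div_lt_iff₀ hs] at h2
  simp only [latticeFloor, PiLp.toLp_apply, mem_Ico]
  constructor <;> linarith

theorem latticeFloor_eq_of_mem_latticeCell (hD : 0 < D) {y w : ℝ^d} (hy : y ∈ lattice D)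
    (hw : w ∈ latticeCell D y) : latticeFloor D w = y := by
  have hs := latticeSpacing_pos (d := d) hD
  ext j
  obtain ⟨m, hm⟩ := hy j
  obtain ⟨h1, h2⟩ := hw j
  rw [← latticeSpacing, hm] at *
  suffices ⌊w j / latticeSpacing D d⌋ = m by simp [latticeFloor, this]
  rw [Int.floor_eq_iff, le_div_iff₀ hs, div_lt_iff₀ hs]
  constructor <;> linarith

theorem norm_sub_le_of_mem_latticeCell (hD : 0 < D) {y w : ℝ^d} (hw : w ∈ latticeCell D y) :
    ‖w - y‖ ≤ √d * latticeSpacing D d := by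
  have h := EuclideanSpace.norm_le_sqrt_card_mul (latticeSpacing_pos hD).le fun j ↦ by
    obtain ⟨h1, h2⟩ := hw j
    rw [PiLp.sub_apply, abs_of_nonneg (sub_nonneg.2 h1)]
    linarith
  rwa [Fintype.card_fin] at h

theorem norm_sub_latticeFloor_le (hD : 0 < D) (x : ℝ^d) :
    ‖x - latticeFloor D x‖ ≤ √d * latticeSpacing D d :=
  norm_sub_le_of_mem_latticeCell hD (mem_latticeCell_latticeFloor hD x)

theorem pairwiseDisjoint_latticeCell (hD : 0 < D) :
    (lattice D : Set (ℝ^d)).PairwiseDisjoint (latticeCell D) :=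
  fun _ hy _ hy' hne ↦ disjoint_left.2 fun _ hw hw' ↦
    hne ((latticeFloor_eq_of_mem_latticeCell hD hy hw).symm.trans
      (latticeFloor_eq_of_mem_latticeCell hD hy' hw'))

theorem latticeCell_eq_preimage (y : ℝ^d) :
    latticeCell D y = (MeasurableEquiv.toLp 2 (Fin d → ℝ)).symm ⁻¹'
      univ.pi fun j ↦ Ico (y j) (y j + latticeSpacing D d) := by
  ext w
  simp [latticeCell]

theorem measurableSet_latticeCell (y : ℝ^d) : MeasurableSet (latticeCell D y) := by
  rw [latticeCell_eq_preimage]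
  exact (MeasurableEquiv.measurable _) (MeasurableSet.univ_pi fun _ ↦ measurableSet_Ico)

theorem volume_latticeCell (hD : 0 < D) (y : ℝ^d) :
    volume (latticeCell D y) = ENNReal.ofReal (latticeSpacing D d ^ d) := by
  rw [latticeCell_eq_preimage,
    (EuclideanSpace.volume_preserving_symm_measurableEquiv_toLp (Fin d)).measure_preimage
      (MeasurableSet.univ_pi fun _ ↦ measurableSet_Ico).nullMeasurableSet,
    volume_pi_pi, ENNReal.ofReal_pow (latticeSpacing_pos hD).le]
  simp

theorem isDiscreteSet_lattice (hD : 0 < D) : IsDiscreteSet (lattice D : Set (ℝ^d)) := by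
  intro x r
  have hs := latticeSpacing_pos (d := d) hD
  refine Set.Finite.of_finite_image (f := fun y j ↦ ⌊y j / latticeSpacing D d⌋)
    ((finite_Icc (fun j ↦ ⌊(x j - r) / latticeSpacing D d⌋)
      (fun j ↦ ⌊(x j + r) / latticeSpacing D d⌋)).subset ?_) fun y hy y' hy' h ↦ ?_
  · rintro _ ⟨y, ⟨-, hy⟩, rfl⟩
    have hj j : |y j - x j| < r := (Real.dist_eq _ _ ▸ PiLp.dist_apply_le y x j).trans_lt hy
    refine ⟨fun j ↦ Int.floor_mono ?_, fun j ↦ Int.floor_mono ?_⟩ <;>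
      gcongr <;> linarith [(abs_lt.1 (hj j)).1, (abs_lt.1 (hj j)).2]
  · rw [← latticeFloor_eq_of_mem_latticeCell hD hy.1 (self_mem_latticeCell hD y),
      ← latticeFloor_eq_of_mem_latticeCell hD hy'.1 (self_mem_latticeCell hD y')]
    ext j
    simp [latticeFloor, congr_fun h j]

theorem volume_ball_sub_le_ncard_mul (hD : 0 < D) (x : ℝ^d) (T : ℝ) :
    volume (ball x (T - √d * latticeSpacing D d)) ≤
      (lattice D ∩ ball x T).ncard * ENNReal.ofReal (latticeSpacing D d ^ d) := by
  have hfin := isDiscreteSet_lattice hD x T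
  rw [Set.ncard_eq_toFinset_card _ hfin]
  calc volume (ball x (T - √d * latticeSpacing D d))
      ≤ volume (⋃ y ∈ hfin.toFinset, latticeCell D y) := measure_mono fun w hw ↦ ?_
    _ ≤ ∑ y ∈ hfin.toFinset, volume (latticeCell D y) := measure_biUnion_finset_le _ _
    _ = _ := by simp [volume_latticeCell hD]
  refine mem_iUnion₂.2 ⟨latticeFloor D w, (Set.Finite.mem_toFinset _).2 ⟨latticeFloor_mem w, ?_⟩,
    mem_latticeCell_latticeFloor hD w⟩
  rw [mem_ball] at hw ⊢
  have := norm_sub_latticeFloor_le hD w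
  rw [← dist_eq_norm] at this
  linarith [dist_triangle_left (latticeFloor D w) x w]

theorem ncard_mul_le_volume_ball (hD : 0 < D) (x : ℝ^d) (T : ℝ) :
    (lattice D ∩ ball x T).ncard * ENNReal.ofReal (latticeSpacing D d ^ d) ≤
      volume (ball x (T + √d * latticeSpacing D d)) := by
  have hfin := isDiscreteSet_lattice hD x T
  rw [Set.ncard_eq_toFinset_card _ hfin]
  calc _ = ∑ y ∈ hfin.toFinset, volume (latticeCell D y) := by simp [volume_latticeCell hD]
    _ = volume (⋃ y ∈ hfin.toFinset, latticeCell D y) := by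
      refine (measure_biUnion_finset ?_ fun y _ ↦ measurableSet_latticeCell y).symm
      rw [Set.Finite.coe_toFinset]
      exact (pairwiseDisjoint_latticeCell hD).subset inter_subset_left
    _ ≤ _ := measure_mono (iUnion₂_subset fun y hy w hw ↦ ?_)
  obtain ⟨-, hy⟩ := (Set.Finite.mem_toFinset _).1 hy
  rw [mem_ball] at hy ⊢
  have := norm_sub_le_of_mem_latticeCell hD hw
  rw [← dist_eq_norm] at this
  linarith [dist_triangle w y x]

theorem hasDensity_lattice (hD : 0 < D) (hd : d ≠ 0) :
    HasDensity volume (lattice D : Set (ℝ^d)) D := by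
  set ρ := √d * latticeSpacing D d
  have hsd : ENNReal.ofReal (latticeSpacing D d ^ d) = ENNReal.ofReal D⁻¹ := by
    rw [latticeSpacing_pow hD hd]
  have lower (T : ℝ) :
      D * volume.real (ball (0 : ℝ^d) (T + -ρ)) ≤ (lattice D ∩ ball (0 : ℝ^d) T).ncard := by
    have := ENNReal.toReal_mono
      (ENNReal.mul_ne_top (ENNReal.natCast_ne_top _) ENNReal.ofReal_ne_top)
      (volume_ball_sub_le_ncard_mul hD (0 : ℝ^d) T)
    rw [← sub_eq_add_neg, measureReal_def, mul_comm, ← le_div_iff₀ hD]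
    simpa [hsd, ENNReal.toReal_ofReal (inv_nonneg.2 hD.le), div_eq_mul_inv] using this
  have upper (T : ℝ) :
      ((lattice D ∩ ball (0 : ℝ^d) T).ncard : ℝ) ≤ D * volume.real (ball (0 : ℝ^d) (T + ρ)) := by
    have := ENNReal.toReal_mono measure_ball_lt_top.ne (ncard_mul_le_volume_ball hD (0 : ℝ^d) T)
    rw [measureReal_def, mul_comm, ← div_le_iff₀ hD]
    simpa [hsd, ENNReal.toReal_ofReal (inv_nonneg.2 hD.le), div_eq_mul_inv] using this
  refine tendsto_of_tendsto_of_tendsto_of_le_of_le'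
    (by simpa using (tendsto_measureReal_ball_add_div volume (0 : ℝ^d) (-ρ)).const_mul D)
    (by simpa using (tendsto_measureReal_ball_add_div volume (0 : ℝ^d) ρ).const_mul D) ?_ ?_ <;>
  filter_upwards [eventually_gt_atTop 0] with T hT <;>
  rw [mul_div_assoc', div_le_div_iff_of_pos_right (measureReal_ball_pos volume 0 hT)]
  exacts [lower T, upper T]

theorem rsi_lattice (hD : 0 < D) :
    RSI (lattice D : Set (ℝ^d)) (√d * latticeSpacing D d + 1) :=
  rsi_of_forall_exists_norm_sub_lt (H := latticeAddSubgroup D d) fun x ↦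
    ⟨latticeFloor D x, latticeFloor_mem x, (norm_sub_latticeFloor_le hD x).trans_lt (lt_add_one _)⟩

end Lattice

theorem stmt9 {d : ℕ} (A : Set (EuclideanSpace ℝ (Fin d))) (L D : ℝ) (hD : 0 < D)
    (hdisc : IsDiscreteSet A) (hA : RSI A L)
    (hdens : ∀ ε > (0 : ℝ), ∃ T₀ : ℝ, ∀ T : ℝ, T₀ ≤ T → ∀ x : EuclideanSpace ℝ (Fin d),
      |((A ∩ Metric.ball x T).ncard : ℝ) / (volume (Metric.ball x T)).toReal - D| < ε) :
    ∃ C : ℝ, ∃ Θ : A ≃ (lattice D : Set (EuclideanSpace ℝ (Fin d))),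
      ∀ a : A, ‖(a : EuclideanSpace ℝ (Fin d)) - (Θ a : EuclideanSpace ℝ (Fin d))‖ < C := by
  classical
  have hAD : HasDensity volume A D :=
    Metric.tendsto_atTop.2 fun ε hε ↦ (hdens ε hε).imp fun _ h T hT ↦ h T hT 0
  rcases eq_or_ne d 0 with rfl | hd
  -- `ℝ^0` is a point, and `D ^ (-1 / 0) = 1`: the lattice does not have density `D` there.
  · have : Nonempty A := (hAD.nonempty hD.ne').to_subtype
    have : Nonempty (lattice D : Set (ℝ^0)) :=
      ⟨⟨0, (latticeAddSubgroup D 0).zero_mem⟩⟩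
    exact ⟨1, equivOfSubsingletonOfSubsingleton (fun _ ↦ Classical.arbitrary _)
      (fun _ ↦ Classical.arbitrary _), fun _ ↦ by
        rw [Subsingleton.elim (_ - _ : ℝ^0) 0, norm_zero]; exact one_pos⟩
  set R := L + (√d * latticeSpacing D d + 1)
  have hΛ := isDiscreteSet_lattice (d := d) hD
  obtain ⟨Θ, hΘ, hΘR⟩ := exists_bijective_of_forall_card_le_card_biUnion
    (r := fun (a : A) (y : (lattice D : Set (ℝ^d))) ↦ dist (a : ℝ^d) y < R)
    (fun a ↦ hΛ.ballFinset a R) (fun y ↦ hdisc.ballFinset y R)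
    (fun _ _ hy ↦ by rw [dist_comm]; exact hΛ.mem_ballFinset.1 hy)
    (fun _ _ ha ↦ hdisc.mem_ballFinset.1 ha)
    (card_le_card_biUnion_ballFinset hD.ne' hAD (hasDensity_lattice hD hd) hA (rsi_lattice hD)
      hdisc hΛ le_rfl)
    (card_le_card_biUnion_ballFinset hD.ne' (hasDensity_lattice hD hd) hAD (rsi_lattice hD) hA
      hΛ hdisc (add_comm _ _).le)
  exact ⟨R, Equiv.ofBijective Θ hΘ, fun a ↦ (dist_eq_norm _ _).symm.trans_lt (hΘR a)⟩
end
end
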